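/- Let ‖·‖ be a norm on ℝⁿ with compatible weak pairing ⟦·,·⟧ satisfying Deimling's inequality, and let μ be the matrix measure induced by ‖·‖. Then for every A ∈ ℝⁿˣⁿ, μ(A) = sup_{‖x‖=1} ⟦Ax, x⟧ = sup_{x ≠ 0} ⟦Ax, x⟧/‖x‖². -/

import Mathlib

open Filter Topology MeasureTheory

/-- The upper right Dini derivative `D⁺φ(t) = limsup_{h→0⁺} (φ(t+h)−φ(t))/h`. -/
noncomputable def DiniUpper (φ : ℝ → ℝ) (t : ℝ) : ℝ :=
  Filter.limsup (fun h : ℝ => (φ (t + h) - φ t) / h) (nhdsWithin 0 (Set.Ioi 0))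

/-- `ν` is a norm on `ℝⁿ`. -/
structure IsNorm {n : ℕ} (ν : (Fin n → ℝ) → ℝ) : Prop where
  pos : ∀ x, x ≠ 0 → 0 < ν x
  homog : ∀ (a : ℝ) (x : Fin n → ℝ), ν (a • x) = |a| * ν x
  triangle : ∀ x y, ν (x + y) ≤ ν x + ν y

/-- `P` is a weak pairing on `ℝⁿ`. -/
structure IsWeakPairing {n : ℕ} (P : (Fin n → ℝ) → (Fin n → ℝ) → ℝ) : Prop where
  subadd : ∀ x₁ x₂ y, P (x₁ + x₂) y ≤ P x₁ y + P x₂ y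
  cont : ∀ y, Continuous fun x => P x y
  homog_left : ∀ (a : ℝ), 0 ≤ a → ∀ x y, P (a • x) y = a * P x y
  homog_right : ∀ (a : ℝ), 0 ≤ a → ∀ x y, P x (a • y) = a * P x y
  neg_neg : ∀ x y, P (-x) (-y) = P x y
  posdef : ∀ x, x ≠ 0 → 0 < P x x
  cauchySchwarz : ∀ x y, |P x y| ≤ Real.sqrt (P x x) * Real.sqrt (P y y)

/-- A weak pairing `P` is compatible with the norm `ν`. -/
def Compatible {n : ℕ} (ν : (Fin n → ℝ) → ℝ)
    (P : (Fin n → ℝ) → (Fin n → ℝ) → ℝ) : Prop :=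
  ∀ x, P x x = (ν x) ^ 2

/-- Deimling's inequality: `⟦x,y⟧ ≤ ‖y‖ · lim_{h→0⁺}(‖y+hx‖−‖y‖)/h`
(the one-sided limit exists for every norm). -/
def DeimlingIneq {n : ℕ} (ν : (Fin n → ℝ) → ℝ)
    (P : (Fin n → ℝ) → (Fin n → ℝ) → ℝ) : Prop :=
  ∀ x y L, Filter.Tendsto (fun h : ℝ => (ν (y + h • x) - ν y) / h)
      (nhdsWithin 0 (Set.Ioi 0)) (nhds L) → P x y ≤ ν y * L

/-- The curve norm derivative formula: for any differentiable curve,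
`‖x(t)‖ D⁺‖x(t)‖ = ⟦ẋ(t), x(t)⟧` for a.e. `t`. -/
def CurveNormDerivFormula {n : ℕ} (ν : (Fin n → ℝ) → ℝ)
    (P : (Fin n → ℝ) → (Fin n → ℝ) → ℝ) : Prop :=
  ∀ (a b : ℝ) (x x' : ℝ → Fin n → ℝ),
    (∀ t ∈ Set.Ioo a b, HasDerivAt x (x' t) t) →
    ∀ᵐ t ∂(volume : Measure ℝ), t ∈ Set.Ioo a b →
      ν (x t) * DiniUpper (fun s => ν (x s)) t = P (x' t) (x t)

/-- The operator norm on matrices induced by the norm `ν` on `ℝⁿ`. -/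
noncomputable def opNorm {n : ℕ} (ν : (Fin n → ℝ) → ℝ)
    (A : Matrix (Fin n) (Fin n) ℝ) : ℝ :=
  sSup ((fun x => ν (A.mulVec x)) '' {x | ν x = 1})

/-- `m` is the matrix measure of `A` induced by `ν`:
`m = lim_{h→0⁺} (‖I + hA‖ − 1)/h`. -/
def HasMatrixMeasure {n : ℕ} (ν : (Fin n → ℝ) → ℝ)
    (A : Matrix (Fin n) (Fin n) ℝ) (m : ℝ) : Prop :=
  Filter.Tendsto
    (fun h : ℝ => (opNorm ν ((1 : Matrix (Fin n) (Fin n) ℝ) + h • A) - 1) / h)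
    (nhdsWithin 0 (Set.Ioi 0)) (nhds m)

section Aux
variable {n : ℕ} {ν : (Fin n → ℝ) → ℝ}

lemma IsNorm.zero' (hν : IsNorm ν) : ν 0 = 0 := by
  have := hν.homog 0 0
  simpa using this

lemma IsNorm.nonneg (hν : IsNorm ν) (x : Fin n → ℝ) : 0 ≤ ν x := by
  rcases eq_or_ne x 0 with rfl | h
  · simp [hν.zero']
  · exact (hν.pos x h).le

lemma IsNorm.neg' (hν : IsNorm ν) (x : Fin n → ℝ) : ν (-x) = ν x := by
  have := hν.homog (-1) x
  simpa using this

lemma IsNorm.sum_le (hν : IsNorm ν) {ι : Type*} (s : Finset ι) (f : ι → Fin n → ℝ) :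
    ν (∑ i ∈ s, f i) ≤ ∑ i ∈ s, ν (f i) := by
  classical
  induction s using Finset.induction with
  | empty => simp [hν.zero']
  | insert _ _ h ih =>
    rw [Finset.sum_insert h, Finset.sum_insert h]
    exact (hν.triangle _ _).trans (by linarith)

lemma IsNorm.le_norm (hν : IsNorm ν) :
    ∃ C : ℝ, 0 ≤ C ∧ ∀ x, ν x ≤ C * ‖x‖ := by
  refine ⟨∑ i, ν (Pi.single i 1), Finset.sum_nonneg fun i _ => hν.nonneg _, fun x => ?_⟩
  have hx : x = ∑ i, (x i) • (Pi.single i 1 : Fin n → ℝ) := by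
    funext j
    simp [Finset.sum_apply, Pi.single_apply]
  calc ν x = ν (∑ i, (x i) • (Pi.single i 1 : Fin n → ℝ)) := by rw [← hx]
    _ ≤ ∑ i, ν ((x i) • (Pi.single i 1 : Fin n → ℝ)) := hν.sum_le _ _
    _ = ∑ i, |x i| * ν (Pi.single i 1) := by simp [hν.homog]
    _ ≤ ∑ i, ‖x‖ * ν (Pi.single i 1) := by
        refine Finset.sum_le_sum fun i _ => ?_
        exact mul_le_mul_of_nonneg_right (by simpa using norm_le_pi_norm x i) (hν.nonneg _)
    _ = (∑ i, ν (Pi.single i 1)) * ‖x‖ := by rw [Finset.sum_mul]; exact Finset.sum_congr rfl fun i _ => mul_comm _ _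

lemma IsNorm.continuous (hν : IsNorm ν) : Continuous ν := by
  obtain ⟨C, hC0, hC⟩ := hν.le_norm
  have key : ∀ x y, ν x - ν y ≤ C * ‖x - y‖ := by
    intro x y
    have := hν.triangle y (x - y)
    simp only [add_sub_cancel] at this
    linarith [hC (x - y)]
  refine (LipschitzWith.of_dist_le_mul (K := C.toNNReal) fun x y => ?_).continuous
  rw [Real.dist_eq, dist_eq_norm, Real.coe_toNNReal C hC0]
  rw [abs_sub_le_iff]
  refine ⟨key x y, ?_⟩
  have := key y x
  rwa [← norm_neg, neg_sub] at this

lemma IsNorm.norm_le (hn : 0 < n) (hν : IsNorm ν) :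
    ∃ c : ℝ, 0 < c ∧ ∀ x, c * ‖x‖ ≤ ν x := by
  have hne : (Metric.sphere (0 : Fin n → ℝ) 1).Nonempty := by
    haveI : Nonempty (Fin n) := ⟨⟨0, hn⟩⟩
    exact ⟨fun _ => 1, by simp [mem_sphere_zero_iff_norm]⟩
  obtain ⟨z, hz, hzmin⟩ :=
    (isCompact_sphere (0 : Fin n → ℝ) 1).exists_isMinOn hne hν.continuous.continuousOn
  rw [mem_sphere_zero_iff_norm] at hz
  have hz0 : z ≠ 0 := fun h => by simp [h] at hz
  refine ⟨ν z, hν.pos z hz0, fun x => ?_⟩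
  rcases eq_or_ne x 0 with rfl | hx0
  · simp [hν.zero']
  · have hxn : (0:ℝ) < ‖x‖ := norm_pos_iff.2 hx0
    have hu : ‖x‖⁻¹ • x ∈ Metric.sphere (0 : Fin n → ℝ) 1 := by
      rw [mem_sphere_zero_iff_norm, norm_smul, norm_inv, norm_norm, inv_mul_cancel₀ hxn.ne']
    have hmin : ν z ≤ ν (‖x‖⁻¹ • x) := hzmin hu
    have heq : ν (‖x‖⁻¹ • x) = ‖x‖⁻¹ * ν x := by
      rw [hν.homog, abs_of_nonneg (inv_nonneg.2 hxn.le)]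
    rw [heq] at hmin
    have h := mul_le_mul_of_nonneg_left hmin hxn.le
    rw [← mul_assoc, mul_inv_cancel₀ hxn.ne', one_mul] at h
    linarith

lemma IsNorm.matrix_bound (hn : 0 < n) (hν : IsNorm ν) (M : Matrix (Fin n) (Fin n) ℝ) :
    ∃ K : ℝ, 0 ≤ K ∧ ∀ x, ν (M.mulVec x) ≤ K * ν x := by
  obtain ⟨C, hC0, hC⟩ := hν.le_norm
  obtain ⟨c, hc0, hc⟩ := hν.norm_le hn
  let f := LinearMap.toContinuousLinearMap (Matrix.mulVecLin M)
  refine ⟨C * ‖f‖ / c, by positivity, fun x => ?_⟩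
  have h2 : ‖M.mulVec x‖ ≤ ‖f‖ * ‖x‖ := by
    have := f.le_opNorm x
    simpa [f, LinearMap.coe_toContinuousLinearMap'] using this
  have h1 := hC (M.mulVec x)
  have h3 := hc x
  rw [div_mul_eq_mul_div, le_div_iff₀ hc0]
  have h4 : ν (M.mulVec x) ≤ C * ‖f‖ * ‖x‖ := by
    calc ν (M.mulVec x) ≤ C * ‖M.mulVec x‖ := h1
      _ ≤ C * (‖f‖ * ‖x‖) := mul_le_mul_of_nonneg_left h2 hC0
      _ = C * ‖f‖ * ‖x‖ := by ring
  have h5 : 0 ≤ C * ‖f‖ := by positivity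
  nlinarith [mul_le_mul_of_nonneg_right h4 hc0.le,
    mul_le_mul_of_nonneg_left h3 h5]

end Aux

section Aux2
variable {n : ℕ} {ν : (Fin n → ℝ) → ℝ} {P : (Fin n → ℝ) → (Fin n → ℝ) → ℝ}

lemma pairing_abs_le (hν : IsNorm ν) (hP : IsWeakPairing P) (hcomp : Compatible ν P)
    (u v : Fin n → ℝ) : |P u v| ≤ ν u * ν v := by
  have h := hP.cauchySchwarz u v
  rwa [hcomp u, hcomp v, Real.sqrt_sq (hν.nonneg u), Real.sqrt_sq (hν.nonneg v)] at h

lemma unit_scale (hν : IsNorm ν) {x : Fin n → ℝ} (hx0 : x ≠ 0) : ν ((ν x)⁻¹ • x) = 1 := by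
  rw [hν.homog, abs_of_nonneg (inv_nonneg.2 (hν.nonneg x)),
    inv_mul_cancel₀ (hν.pos x hx0).ne']

lemma pairing_scale (hP : IsWeakPairing P) (A : Matrix (Fin n) (Fin n) ℝ)
    (x : Fin n → ℝ) {c : ℝ} (hc : 0 ≤ c) :
    P (A.mulVec (c • x)) (c • x) = c ^ 2 * P (A.mulVec x) x := by
  rw [Matrix.mulVec_smul, hP.homog_left c hc, hP.homog_right c hc]; ring

end Aux2

/-- Theorem 18 (Lumer's equality for weak pairings): the matrix measure equals
the supremum of `⟦Ax, x⟧` over the unit sphere, which equals the supremum of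
`⟦Ax, x⟧/‖x‖²` over nonzero vectors. -/
theorem lumer_equality_weak_pairing {n : ℕ} (hn : 0 < n)
    (ν : (Fin n → ℝ) → ℝ) (P : (Fin n → ℝ) → (Fin n → ℝ) → ℝ)
    (hν : IsNorm ν) (hP : IsWeakPairing P) (hcomp : Compatible ν P)
    (hDei : DeimlingIneq ν P)
    (A : Matrix (Fin n) (Fin n) ℝ) :
    HasMatrixMeasure ν A
      (sSup ((fun x => P (A.mulVec x) x) '' {x | ν x = 1})) ∧
    sSup ((fun x => P (A.mulVec x) x) '' {x | ν x = 1})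
      = sSup ((fun x => P (A.mulVec x) x / ν x ^ 2) ''
          {x : Fin n → ℝ | x ≠ 0}) := by
  classical
  set S := ((fun x => P (A.mulVec x) x) '' {x | ν x = 1}) with hS
  set s := sSup S with hs
  clear_value s
  obtain ⟨K, hK0, hK⟩ := hν.matrix_bound hn A
  have hz0 : (fun _ : Fin n => (1:ℝ)) ≠ 0 := by
    intro h
    have := congrFun h ⟨0, hn⟩
    norm_num at this
  obtain ⟨u₀, hu₀⟩ : ∃ u : Fin n → ℝ, ν u = 1 := ⟨_, unit_scale hν hz0⟩
  have hSne : S.Nonempty := ⟨_, u₀, hu₀, rfl⟩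
  have hSbdd : BddAbove S := by
    refine ⟨K, ?_⟩
    rintro r ⟨x, hx, rfl⟩
    rw [Set.mem_setOf_eq] at hx
    have h1 := (abs_le.1 (pairing_abs_le hν hP hcomp (A.mulVec x) x)).2
    have h2 := hK x
    rw [hx, mul_one] at h1 h2
    exact h1.trans h2
  have hRayleigh : ∀ y, y ≠ 0 → P (A.mulVec y) y ≤ s * ν y ^ 2 := by
    intro y hy0
    have hνy := hν.pos y hy0
    have hmem : P (A.mulVec ((ν y)⁻¹ • y)) ((ν y)⁻¹ • y) ≤ s := by
      have h1 : P (A.mulVec ((ν y)⁻¹ • y)) ((ν y)⁻¹ • y) ≤ sSup S :=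
        le_csSup hSbdd ⟨_, unit_scale hν hy0, rfl⟩
      rwa [← hs] at h1
    rw [pairing_scale hP A y (inv_nonneg.2 hνy.le)] at hmem
    calc P (A.mulVec y) y = (ν y) ^ 2 * (((ν y)⁻¹) ^ 2 * P (A.mulVec y) y) := by
          field_simp
      _ ≤ (ν y) ^ 2 * s := mul_le_mul_of_nonneg_left hmem (by positivity)
      _ = s * ν y ^ 2 := by ring
  have hmv : ∀ (t : ℝ) (x : Fin n → ℝ),
      ((1 : Matrix (Fin n) (Fin n) ℝ) + t • A).mulVec x = x + t • A.mulVec x := by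
    intro t x
    rw [Matrix.add_mulVec, Matrix.one_mulVec, Matrix.smul_mulVec]
  have hop_le : ∀ (M : Matrix (Fin n) (Fin n) ℝ) (b : ℝ),
      (∀ x, ν x = 1 → ν (M.mulVec x) ≤ b) → opNorm ν M ≤ b := by
    intro M b hb
    exact csSup_le ⟨_, u₀, hu₀, rfl⟩ (by rintro r ⟨x, hx, rfl⟩; exact hb x hx)
  have hle_op : ∀ (M : Matrix (Fin n) (Fin n) ℝ) (x : Fin n → ℝ), ν x = 1 →
      ν (M.mulVec x) ≤ opNorm ν M := by
    intro M x hx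
    obtain ⟨KM, hKM0, hKM⟩ := hν.matrix_bound hn M
    refine le_csSup ⟨KM, ?_⟩ ⟨x, hx, rfl⟩
    rintro r ⟨y, hy, rfl⟩
    have h1 := hKM y
    rw [Set.mem_setOf_eq] at hy
    rwa [hy, mul_one] at h1
  -- lower bound: s ≤ (‖1 + hA‖ - 1)/h for every h > 0
  have hlow : ∀ h : ℝ, 0 < h →
      s ≤ (opNorm ν ((1 : Matrix (Fin n) (Fin n) ℝ) + h • A) - 1) / h := by
    intro h hh
    rw [hs]
    refine csSup_le hSne ?_
    rintro r ⟨x, hx, rfl⟩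
    rw [Set.mem_setOf_eq] at hx
    set q : ℝ → ℝ := fun t => (ν (x + t • A.mulVec x) - 1) / t with hq
    have hmono : MonotoneOn q (Set.Ioi (0:ℝ)) := by
      intro t ht u hu htu
      rw [Set.mem_Ioi] at ht hu
      have hu0 : u ≠ 0 := hu.ne'
      have hr0 : 0 ≤ t / u := div_nonneg ht.le hu.le
      have hr1 : t / u ≤ 1 := (div_le_one hu).2 htu
      have key : x + t • A.mulVec x
          = (1 - t / u) • x + (t / u) • (x + u • A.mulVec x) := by
        rw [smul_add, smul_smul, div_mul_cancel₀ _ hu0, sub_smul, one_smul]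
        abel
      have hb : ν (x + t • A.mulVec x)
          ≤ (1 - t / u) + (t / u) * ν (x + u • A.mulVec x) := by
        calc ν (x + t • A.mulVec x)
            = ν ((1 - t / u) • x + (t / u) • (x + u • A.mulVec x)) := by rw [← key]
          _ ≤ ν ((1 - t / u) • x) + ν ((t / u) • (x + u • A.mulVec x)) := hν.triangle _ _
          _ = (1 - t / u) * ν x + (t / u) * ν (x + u • A.mulVec x) := by
              rw [hν.homog, hν.homog, abs_of_nonneg hr0,
                abs_of_nonneg (by linarith : (0:ℝ) ≤ 1 - t / u)]
          _ = (1 - t / u) + (t / u) * ν (x + u • A.mulVec x) := by rw [hx, mul_one]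
      show q t ≤ q u
      simp only [hq]
      rw [div_le_div_iff₀ ht hu]
      have h5 : (ν (x + t • A.mulVec x) - 1) * u
          ≤ (t / u * (ν (x + u • A.mulVec x) - 1)) * u :=
        mul_le_mul_of_nonneg_right (by linarith) hu.le
      have h6 : (t / u * (ν (x + u • A.mulVec x) - 1)) * u
          = (ν (x + u • A.mulVec x) - 1) * t := by
        field_simp
      linarith
    have hbdd : BddBelow (q '' Set.Ioi 0) := by
      refine ⟨-(ν (A.mulVec x)), ?_⟩
      rintro r ⟨t, ht, rfl⟩
      rw [Set.mem_Ioi] at ht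
      have hxy : (x + t • A.mulVec x) + -(t • A.mulVec x) = x := by abel
      have h1 := hν.triangle (x + t • A.mulVec x) (-(t • A.mulVec x))
      rw [hxy, hν.neg', hν.homog, abs_of_nonneg ht.le, hx] at h1
      show -(ν (A.mulVec x)) ≤ q t
      simp only [hq]
      rw [le_div_iff₀ ht]
      nlinarith
    have hlim := hmono.tendsto_nhdsGT hbdd
    have hq' : (fun t : ℝ => (ν (x + t • A.mulVec x) - ν x) / t) = q := by
      funext t
      simp only [hq, hx]
    have hDeiApp : P (A.mulVec x) x ≤ sInf (q '' Set.Ioi 0) := by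
      have h2 := hDei (A.mulVec x) x _ (by rw [hq']; exact hlim)
      rwa [hx, one_mul] at h2
    have hLq : sInf (q '' Set.Ioi 0) ≤ q h := csInf_le hbdd ⟨h, hh, rfl⟩
    have hqg : q h ≤ (opNorm ν ((1 : Matrix (Fin n) (Fin n) ℝ) + h • A) - 1) / h := by
      have h3 := hle_op ((1 : Matrix (Fin n) (Fin n) ℝ) + h • A) x hx
      rw [hmv h x] at h3
      simp only [hq]
      gcongr
    linarith
  -- upper bound
  obtain ⟨C, hCdef⟩ : ∃ C : ℝ, C = |s| * K + K * K := ⟨_, rfl⟩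
  obtain ⟨h₀, hh₀def⟩ : ∃ h₀ : ℝ, h₀ = (2 * (K + 1))⁻¹ := ⟨_, rfl⟩
  have hh₀ : 0 < h₀ := by rw [hh₀def]; positivity
  have hupp : ∀ h : ℝ, 0 < h → h < h₀ →
      (opNorm ν ((1 : Matrix (Fin n) (Fin n) ℝ) + h • A) - 1) / h ≤ s + h * C := by
    intro h hh hhlt
    have hhK : h * K ≤ 1 / 2 := by
      have h1 : h * (K + 1) ≤ h₀ * (K + 1) :=
        mul_le_mul_of_nonneg_right hhlt.le (by positivity)
      have h2 : h₀ * (K + 1) = 1 / 2 := by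
        rw [hh₀def]
        field_simp
      nlinarith
    have hkey : opNorm ν ((1 : Matrix (Fin n) (Fin n) ℝ) + h • A)
        ≤ 1 + h * (s + h * C) := by
      refine hop_le _ _ ?_
      intro x hx
      rw [hmv h x]
      set y := x + h • A.mulVec x with hy
      have hνAx : ν (A.mulVec x) ≤ K := by
        have h1 := hK x
        rwa [hx, mul_one] at h1
      have hybound : ν y ≤ 1 + h * K := by
        refine (hν.triangle _ _).trans ?_
        rw [hx, hν.homog, abs_of_nonneg hh.le]
        nlinarith
      have hylow : 1 - h * K ≤ ν y := by
        have hxy : y + -(h • A.mulVec x) = x := by rw [hy]; abel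
        have h1 := hν.triangle y (-(h • A.mulVec x))
        rw [hxy, hν.neg', hν.homog, abs_of_nonneg hh.le, hx] at h1
        nlinarith
      have hνy : (0:ℝ) < ν y := by linarith
      have hy0 : y ≠ 0 := by
        intro hcon
        rw [hcon, hν.zero'] at hνy
        exact lt_irrefl _ hνy
      have hdec : A.mulVec x = A.mulVec y + h • (-(A.mulVec (A.mulVec x))) := by
        rw [hy, Matrix.mulVec_add, Matrix.mulVec_smul, smul_neg]
        abel
      have hPxy : P x y ≤ ν y := by
        have h1 := (abs_le.1 (pairing_abs_le hν hP hcomp x y)).2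
        rwa [hx, one_mul] at h1
      have hC2 : ν (A.mulVec (A.mulVec x)) ≤ K * K := by
        have h1 := (hK (A.mulVec x)).trans (mul_le_mul_of_nonneg_left hνAx hK0)
        exact h1
      have hPAxy : P (A.mulVec x) y ≤ s * ν y ^ 2 + h * (K * K) * ν y := by
        calc P (A.mulVec x) y
            = P (A.mulVec y + h • (-(A.mulVec (A.mulVec x)))) y := by rw [← hdec]
          _ ≤ P (A.mulVec y) y + P (h • (-(A.mulVec (A.mulVec x)))) y := hP.subadd _ _ _
          _ = P (A.mulVec y) y + h * P (-(A.mulVec (A.mulVec x))) y := by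
              rw [hP.homog_left h hh.le]
          _ ≤ s * ν y ^ 2 + h * (ν (A.mulVec (A.mulVec x)) * ν y) := by
              refine add_le_add (hRayleigh y hy0) (mul_le_mul_of_nonneg_left ?_ hh.le)
              have h1 := (abs_le.1 (pairing_abs_le hν hP hcomp
                (-(A.mulVec (A.mulVec x))) y)).2
              rwa [hν.neg'] at h1
          _ ≤ s * ν y ^ 2 + h * (K * K) * ν y := by
              have h2 := mul_le_mul_of_nonneg_right hC2 (hν.nonneg y)
              nlinarith
      have hmain : ν y ^ 2 ≤ ν y + h * P (A.mulVec x) y := by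
        have h1 := hP.subadd x (h • A.mulVec x) y
        rw [← hy, hP.homog_left h hh.le] at h1
        have h2 := hcomp y
        linarith
      have hcomb : ν y ≤ 1 + h * s * ν y + h * h * (K * K) := by
        have hstep : ν y * ν y ≤ ν y * (1 + h * s * ν y + h * h * (K * K)) := by
          nlinarith [mul_le_mul_of_nonneg_left hPAxy hh.le]
        exact le_of_mul_le_mul_left hstep hνy
      have habs : s * ν y - s ≤ |s| * (h * K) := by
        have h1 : s * (ν y - 1) ≤ |s| * |ν y - 1| := by
          calc s * (ν y - 1) ≤ |s * (ν y - 1)| := le_abs_self _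
            _ = |s| * |ν y - 1| := abs_mul _ _
        have h2 : |ν y - 1| ≤ h * K := abs_le.2 ⟨by linarith, by linarith⟩
        nlinarith [abs_nonneg s]
      have h3 : h * (s * ν y) ≤ h * (s + |s| * (h * K)) :=
        mul_le_mul_of_nonneg_left (by linarith) hh.le
      rw [hCdef]
      linarith
    rw [div_le_iff₀ hh]
    linarith
  constructor
  · show Filter.Tendsto _ (nhdsWithin 0 (Set.Ioi 0)) (nhds s)
    have htendu : Filter.Tendsto (fun h : ℝ => s + h * C) (nhdsWithin (0:ℝ) (Set.Ioi 0))
        (nhds s) := by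
      have h1 : Filter.Tendsto (fun h : ℝ => s + h * C) (nhds (0:ℝ)) (nhds (s + 0 * C)) :=
        tendsto_const_nhds.add (tendsto_id.mul tendsto_const_nhds)
      simpa using h1.mono_left nhdsWithin_le_nhds
    refine tendsto_of_tendsto_of_tendsto_of_le_of_le' tendsto_const_nhds htendu ?_ ?_
    · exact Filter.eventually_of_mem self_mem_nhdsWithin fun h hh => hlow h hh
    · refine Filter.eventually_of_mem (Ioo_mem_nhdsGT_of_mem ⟨le_refl (0:ℝ), hh₀⟩) ?_
      rintro h ⟨hh1, hh2⟩
      exact hupp h hh1 hh2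
  · rw [hs, hS]
    congr 1
    ext r
    constructor
    · rintro ⟨x, hx, rfl⟩
      rw [Set.mem_setOf_eq] at hx
      have hx0 : x ≠ 0 := by
        intro h
        rw [h, hν.zero'] at hx
        norm_num at hx
      exact ⟨x, hx0, by simp [hx]⟩
    · rintro ⟨x, hx0, rfl⟩
      refine ⟨(ν x)⁻¹ • x, unit_scale hν hx0, ?_⟩
      show P (A.mulVec ((ν x)⁻¹ • x)) ((ν x)⁻¹ • x) = P (A.mulVec x) x / ν x ^ 2
      rw [pairing_scale hP A x (inv_nonneg.2 (hν.nonneg x))]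
      have hne := (hν.pos x hx0).ne'
      field_simp
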